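/- Fix an odd positive integer N and a real number M with 2 < M < 4N − 4. Let V be the complex inner product space of functions (Fin(2N) → Fin 2) → ℂ with the standard inner product, with standard orthonormal basis {e_f : f : Fin(2N) → Fin 2}. For j = 1, …, 2N−1 let h_j be the self-adjoint linear endomorphism of V acting diagonally by h_j e_f = (1 − (−1)^{f(j)+f(j+1)}) e_f (the Ising bond term I − σ_j^Z σ_{j+1}^Z). Set H := Σ_{j=1}^{2N−1} h_j, B := h_N, H' := H − B, H̄' := H'·E^{H'}((−M,M)) + M·E^{H'}([M,∞)), and H̄ := B + H̄'. Then ‖(H − H̄)·E^{H̄}((−∞,M])‖ ≥ 4N − 4 − M. -/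

import Mathlib

/-- The spectral projection `E^T(I)` of an endomorphism `T` of a finite-dimensional
complex inner product space: the orthogonal projection onto the span of all
eigenvectors of `T` whose eigenvalue lies in `I ⊆ ℝ`. -/
noncomputable def specProj {V : Type*} [NormedAddCommGroup V] [InnerProductSpace ℂ V]
    [FiniteDimensional ℂ V] (T : V →L[ℂ] V) (I : Set ℝ) : V →L[ℂ] V :=
  (⨆ μ ∈ I, Module.End.eigenspace (↑T : V →ₗ[ℂ] V) (μ : ℂ)).subtypeL.comp
    (Submodule.orthogonalProjectionOnto (⨆ μ ∈ I, Module.End.eigenspace (↑T : V →ₗ[ℂ] V) (μ : ℂ)))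

/-- The energy-truncated operator `T̄ := T·E^T((−M,M)) + M·E^T([M,∞))`. -/
noncomputable def etrunc {V : Type*} [NormedAddCommGroup V] [InnerProductSpace ℂ V]
    [FiniteDimensional ℂ V] (T : V →L[ℂ] V) (M : ℝ) : V →L[ℂ] V :=
  T * specProj T (Set.Ioo (-M) M) + (M : ℂ) • specProj T (Set.Ici M)

/-- The diagonal operator on `EuclideanSpace ℂ ι` multiplying the `i`-th coordinate
by `c i`. -/
noncomputable def diagOp {ι : Type*} [Fintype ι] [DecidableEq ι] (c : ι → ℂ) :
    EuclideanSpace ℂ ι →L[ℂ] EuclideanSpace ℂ ι :=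
  LinearMap.toContinuousLinearMap
    { toFun := fun g => WithLp.toLp 2 fun i => c i * g i
      map_add' := fun x y => by
        ext i
        simp [EuclideanSpace, PiLp.add_apply, mul_add]
      map_smul' := fun m x => by
        ext i
        simp [EuclideanSpace, PiLp.smul_apply, smul_eq_mul]
        ring }

/-- The Ising bond term `h_k = I − σ_k^Z σ_{k+1}^Z` acting on the chain of `2N`
spins, for the bond `k` joining sites `k` and `k+1` (`0`-indexed): it acts
diagonally on the configuration basis by
`h_k e_f = (1 − (−1)^{f(k)+f(k+1)}) e_f`. -/
noncomputable def bondOp (N : ℕ) (k : Fin (2 * N - 1)) :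
    EuclideanSpace ℂ (Fin (2 * N) → Fin 2) →L[ℂ] EuclideanSpace ℂ (Fin (2 * N) → Fin 2) :=
  diagOp fun f =>
    1 - (-1 : ℂ) ^ (((f ⟨k.1, by have := k.2; omega⟩ : Fin 2) : ℕ) +
      ((f ⟨k.1 + 1, by have := k.2; omega⟩ : Fin 2) : ℕ))

/-!
All operators are diagonal in the configuration basis. Take the configuration `f` that is Néel
ordered on each half of the chain and aligned across the middle bond: every bond but the middle
one is broken, so `e_f` has energy `ε = 4N - 4 ≥ M` for both `H` and `H' = H - B`, while `B e_f = 0`.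
Truncation lowers the `H'`-energy of `e_f` to exactly `M`, so `H̄ e_f = M e_f`; hence `e_f` lies in
the range of `E^{H̄}((-∞, M])` and `(H - H̄) e_f = (ε - M) e_f`.
-/

section SpectralProjection

variable {V : Type*} [NormedAddCommGroup V] [InnerProductSpace ℂ V] [FiniteDimensional ℂ V]

lemma specProj_eq_starProjection (T : V →L[ℂ] V) (I : Set ℝ) :
    specProj T I = (⨆ μ ∈ I, Module.End.eigenspace (T : V →ₗ[ℂ] V) (μ : ℂ)).starProjection :=
  rfl

lemma specProj_apply_of_apply_eq_smul {T : V →L[ℂ] V} {I : Set ℝ} {μ : ℝ} (hμ : μ ∈ I) {x : V}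
    (hx : T x = (μ : ℂ) • x) : specProj T I x = x := by
  rw [specProj_eq_starProjection, Submodule.starProjection_eq_self_iff]
  exact le_iSup₂ (f := fun ν (_ : ν ∈ I) => Module.End.eigenspace (T : V →ₗ[ℂ] V) (ν : ℂ)) μ hμ
    (Module.End.mem_eigenspace_iff.mpr hx)

/-- `x` is an eigenvector of `T†` with real eigenvalue `ε ∉ I`, hence orthogonal to every
eigenvector of `T` with eigenvalue in `I`. -/
lemma specProj_apply_eq_zero_of_inner_apply {T : V →L[ℂ] V} {I : Set ℝ} {ε : ℝ} (hε : ε ∉ I)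
    {x : V} (hx : ∀ u, inner ℂ x (T u) = ε * inner ℂ x u) : specProj T I x = 0 := by
  rw [specProj_eq_starProjection, Submodule.starProjection_apply_eq_zero_iff,
    Submodule.mem_orthogonal']
  suffices h : (⨆ μ ∈ I, Module.End.eigenspace (T : V →ₗ[ℂ] V) (μ : ℂ)) ≤
      LinearMap.ker (innerₛₗ ℂ x) from fun u hu => h hu
  refine iSup₂_le fun μ hμ u hu => ?_
  have hne : (ε : ℂ) - μ ≠ 0 := sub_ne_zero.mpr fun h => hε (Complex.ofReal_injective h ▸ hμ)
  have hTu : T u = (μ : ℂ) • u := Module.End.mem_eigenspace_iff.mp hu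
  have hxu := hx u
  rw [hTu, inner_smul_right] at hxu
  rw [LinearMap.mem_ker, innerₛₗ_apply_apply]
  exact (mul_eq_zero.mp (by linear_combination -hxu)).resolve_left hne

lemma etrunc_apply_of_le {T : V →L[ℂ] V} {M ε : ℝ} (hM : M ≤ ε) {x : V}
    (hTx : T x = (ε : ℂ) • x) (hx : ∀ u, inner ℂ x (T u) = ε * inner ℂ x u) :
    etrunc T M x = (M : ℂ) • x := by
  have hlow : specProj T (Set.Ioo (-M) M) x = 0 :=
    specProj_apply_eq_zero_of_inner_apply (fun h => hM.not_gt h.2) hx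
  have hhigh : specProj T (Set.Ici M) x = x := specProj_apply_of_apply_eq_smul hM hTx
  simp [etrunc, hlow, hhigh]

end SpectralProjection

lemma norm_le_opNorm_of_apply_eq_smul {𝕜 E : Type*} [NontriviallyNormedField 𝕜]
    [NormedAddCommGroup E] [NormedSpace 𝕜 E] {A : E →L[𝕜] E} {c : 𝕜} {x : E} (hx1 : ‖x‖ = 1) (hAx : A x = c • x) : ‖c‖ ≤ ‖A‖ := by
  simpa [hAx, norm_smul, hx1] using A.le_opNorm x

lemma sub_le_norm_sub_etrunc_mul_specProj {V : Type*} [NormedAddCommGroup V]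
    [InnerProductSpace ℂ V] [FiniteDimensional ℂ V] {H B : V →L[ℂ] V} {M ε : ℝ} (hM : M ≤ ε)
    {x : V} (hx1 : ‖x‖ = 1) (hBx : B x = 0) (hHx : H x = (ε : ℂ) • x)
    (hx : ∀ u, inner ℂ x ((H - B) u) = ε * inner ℂ x u) :
    ε - M ≤ ‖(H - (B + etrunc (H - B) M)) * specProj (B + etrunc (H - B) M) (Set.Iic M)‖ := by
  have hH'x : (H - B) x = (ε : ℂ) • x := by simp [hHx, hBx]
  have hHbar : (B + etrunc (H - B) M) x = (M : ℂ) • x := by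
    simp [hBx, etrunc_apply_of_le hM hH'x hx]
  have hP : specProj (B + etrunc (H - B) M) (Set.Iic M) x = x :=
    specProj_apply_of_apply_eq_smul Set.self_mem_Iic hHbar
  have hgap : ((H - (B + etrunc (H - B) M)) * specProj (B + etrunc (H - B) M) (Set.Iic M)) x =
      ((ε - M : ℝ) : ℂ) • x := by
    simp [hP, hHx, hHbar, sub_smul]
  calc ε - M ≤ ‖((ε - M : ℝ) : ℂ)‖ := by rw [Complex.norm_real]; exact Real.le_norm_self _
    _ ≤ _ := norm_le_opNorm_of_apply_eq_smul hx1 hgap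

section Diagonal

variable {ι : Type*} [Fintype ι] [DecidableEq ι]

lemma diagOp_apply (c : ι → ℂ) (u : EuclideanSpace ℂ ι) (i : ι) : diagOp c u i = c i * u i :=
  rfl

lemma diagOp_single (c : ι → ℂ) (i : ι) :
    diagOp c (EuclideanSpace.single i 1) = c i • EuclideanSpace.single i 1 := by
  ext j
  by_cases h : j = i <;> simp [diagOp_apply, h]

lemma inner_single_diagOp (c : ι → ℂ) (i : ι) (u : EuclideanSpace ℂ ι) :
    inner ℂ (EuclideanSpace.single i (1 : ℂ)) (diagOp c u) =
      c i * inner ℂ (EuclideanSpace.single i (1 : ℂ)) u := by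
  simp [EuclideanSpace.inner_single_left, diagOp_apply]

lemma diagOp_sub (c d : ι → ℂ) : diagOp c - diagOp d = diagOp (c - d) := by
  ext u i
  simp [diagOp_apply, sub_mul]

lemma diagOp_sum {κ : Type*} (s : Finset κ) (c : κ → ι → ℂ) :
    ∑ k ∈ s, diagOp (c k) = diagOp (∑ k ∈ s, c k) := by
  ext u i
  simp [diagOp_apply, Finset.sum_mul]

end Diagonal

section IsingChain

variable {N : ℕ}

def bondEnergy (N : ℕ) (k : Fin (2 * N - 1)) (f : Fin (2 * N) → Fin 2) : ℂ :=
  1 - (-1 : ℂ) ^ (((f ⟨k.1, by have := k.2; omega⟩ : Fin 2) : ℕ) +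
    ((f ⟨k.1 + 1, by have := k.2; omega⟩ : Fin 2) : ℕ))

lemma bondOp_eq_diagOp (k : Fin (2 * N - 1)) : bondOp N k = diagOp (bondEnergy N k) := rfl

def cutNeel (N : ℕ) : Fin (2 * N) → Fin 2 := fun j =>
  if j.1 < N then ⟨j.1 % 2, by omega⟩ else ⟨(j.1 + 1) % 2, by omega⟩

lemma val_cutNeel (j : Fin (2 * N)) :
    ((cutNeel N j : Fin 2) : ℕ) = if j.1 < N then j.1 % 2 else (j.1 + 1) % 2 := by
  unfold cutNeel
  split_ifs <;> rfl

lemma bondEnergy_cutNeel (k : Fin (2 * N - 1)) :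
    bondEnergy N k (cutNeel N) = if k.1 = N - 1 then 0 else 2 := by
  have hk := k.2
  have hparity : (((cutNeel N ⟨k.1, by omega⟩ : Fin 2) : ℕ) +
      ((cutNeel N ⟨k.1 + 1, by omega⟩ : Fin 2) : ℕ)) % 2 = if k.1 = N - 1 then 0 else 1 := by
    simp only [val_cutNeel]
    split_ifs <;> omega
  rw [bondEnergy, neg_one_pow_eq_pow_mod_two, hparity]
  split_ifs <;> norm_num

lemma sum_bondEnergy_cutNeel (hN : 0 < N) :
    ∑ k : Fin (2 * N - 1), bondEnergy N k (cutNeel N) = 4 * N - 4 := by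
  simp only [bondEnergy_cutNeel]
  rw [Fin.sum_univ_eq_sum_range (fun i => if i = N - 1 then (0 : ℂ) else 2),
    ← Finset.add_sum_erase _ _ (Finset.mem_range.mpr (by omega : N - 1 < 2 * N - 1)),
    Finset.sum_congr rfl fun i hi => if_neg (Finset.ne_of_mem_erase hi), Finset.sum_const,
    Finset.card_erase_of_mem (Finset.mem_range.mpr (by omega)), Finset.card_range, if_pos rfl,
    nsmul_eq_mul, Nat.cast_sub (by omega), Nat.cast_sub (by omega)]
  push_cast
  ring

end IsingChain

/-- Counterexample (Appendix A): for the ferromagnetic Ising chain of `2N` spins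
(`N` odd) cut in the middle, with `B = h_N` the middle bond, `H' = H − B`, and
`H̄ = B + etrunc H' M`, the operator-norm quantity `‖(H − H̄)·E^{H̄}((−∞,M])‖` is
at least `4N − 4 − M`, hence diverges with the volume. -/
theorem stmt_16 (N : ℕ) (hpos : 0 < N) (M : ℝ)
    (hM4 : M < 4 * (N : ℝ) - 4) :
    4 * (N : ℝ) - 4 - M ≤
      ‖((∑ k : Fin (2 * N - 1), bondOp N k) -
          (bondOp N ⟨N - 1, by omega⟩ +
            etrunc ((∑ k : Fin (2 * N - 1), bondOp N k) - bondOp N ⟨N - 1, by omega⟩) M)) *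
        specProj
          (bondOp N ⟨N - 1, by omega⟩ +
            etrunc ((∑ k : Fin (2 * N - 1), bondOp N k) - bondOp N ⟨N - 1, by omega⟩) M)
          (Set.Iic M)‖ := by
  set mid : Fin (2 * N - 1) := ⟨N - 1, by omega⟩
  set x := EuclideanSpace.single (cutNeel N) (1 : ℂ)
  have hmid : bondEnergy N mid (cutNeel N) = 0 := by simp [bondEnergy_cutNeel, mid]
  have hcut : (∑ k, bondOp N k) - bondOp N mid =
      diagOp (fun f => ∑ k, bondEnergy N k f - bondEnergy N mid f) := by
    simp only [bondOp_eq_diagOp, diagOp_sum, diagOp_sub]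
    congr 1
    ext f
    simp
  have hcutNeel : ∑ k, bondEnergy N k (cutNeel N) - bondEnergy N mid (cutNeel N) =
      ((4 * N - 4 : ℝ) : ℂ) := by
    rw [sum_bondEnergy_cutNeel hpos, hmid]
    push_cast
    ring
  have hBx : bondOp N mid x = 0 := by simp [x, bondOp_eq_diagOp, diagOp_single, hmid]
  have hH'x : ((∑ k, bondOp N k) - bondOp N mid) x = ((4 * N - 4 : ℝ) : ℂ) • x := by
    rw [hcut, diagOp_single, hcutNeel]
  refine sub_le_norm_sub_etrunc_mul_specProj hM4.le (by simp [x]) hBx ?_ fun u => ?_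
  · simpa [hBx] using hH'x
  · rw [hcut, inner_single_diagOp, hcutNeel]
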